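/- Let $\gamma_1, \gamma_2 : [0,1] \to [0,1]^2$ be continuous injective curves with disjoint images, with $\gamma_i(0) = (0, a_i)$ and $\gamma_i(1) = (1, b_i)$, where $a_1 < a_2$. Then $b_1 < b_2$. -/
import Mathlib

open Set

section CrossingAux
open Finset

private def e01 : Fin 3 → Fin 3 → ZMod 2 := fun a b =>
  if (a = 0 ∧ b = 1) ∨ (a = 1 ∧ b = 0) then 1 else 0

private lemma e01_eq_sub : ∀ a b : Fin 3, a ≠ 2 → b ≠ 2 →
    e01 a b = (if b = 1 then (1:ZMod 2) else 0) - (if a = 1 then 1 else 0) := by decide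

private lemma e01_no0 : ∀ a b : Fin 3, a ≠ 0 → b ≠ 0 → e01 a b = 0 := by decide

private lemma e01_no1 : ∀ a b : Fin 3, a ≠ 1 → b ≠ 1 → e01 a b = 0 := by decide

private lemma e01_tri : ∀ a b c : Fin 3, ¬(a ≠ b ∧ b ≠ c ∧ a ≠ c) →
    e01 a b + e01 b c + e01 a c = 0 := by decide

private lemma fin3_cover : ∀ a b c : Fin 3, a ≠ b → b ≠ c → a ≠ c →
    ∀ k : Fin 3, k = a ∨ k = b ∨ k = c := by decide

private lemma zmod2_tele : ∀ m : ℕ, ∀ f : ℕ → ZMod 2,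
    ∑ j ∈ range m, (f j + f (j+1)) = f 0 + f m := by
  intro m
  induction m with
  | zero => intro f; simp; exact (by decide : ∀ a : ZMod 2, 0 = a + a) _
  | succ k ih =>
    intro f
    rw [Finset.sum_range_succ, ih]
    exact (by decide : ∀ a b c : ZMod 2, (a + b) + (b + c) = a + c) _ _ _

private lemma discrete_sperner (n : ℕ) (ℓ : ℕ → ℕ → Fin 3)
    (hleft : ∀ j ≤ n, ℓ 0 j ≠ 1)
    (hright : ∀ j ≤ n, ℓ n j = 1)
    (hbot : ∀ i ≤ n, ℓ i 0 ≠ 2)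
    (htop : ∀ i ≤ n, ℓ i n ≠ 0) :
    ∃ i j, i < n ∧ j < n ∧
      ∀ k : Fin 3, ∃ a b, (a = i ∨ a = i+1) ∧ (b = j ∨ b = j+1) ∧ ℓ a b = k := by
  rcases Nat.eq_zero_or_pos n with h0 | hn
  · exact absurd (hright 0 (by omega)) (by rw [h0] at hleft ⊢; exact hleft 0 le_rfl)
  by_contra hcon
  push_neg at hcon
  -- abbreviations
  set h' : ℕ → ℕ → ZMod 2 := fun i j => e01 (ℓ i j) (ℓ (i+1) j) with hh'
  set v : ℕ → ℕ → ZMod 2 := fun i j => e01 (ℓ i j) (ℓ i (j+1)) with hv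
  have key : ∀ i j, i < n → j < n →
      (e01 (ℓ i j) (ℓ (i+1) j) + e01 (ℓ (i+1) j) (ℓ (i+1) (j+1)) + e01 (ℓ i j) (ℓ (i+1) (j+1))) +
      (e01 (ℓ i j) (ℓ i (j+1)) + e01 (ℓ i (j+1)) (ℓ (i+1) (j+1)) + e01 (ℓ i j) (ℓ (i+1) (j+1)))
      = 0 := by
    intro i j hi hj
    have tri1 : ¬(ℓ i j ≠ ℓ (i+1) j ∧ ℓ (i+1) j ≠ ℓ (i+1) (j+1) ∧ ℓ i j ≠ ℓ (i+1) (j+1)) := by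
      rintro ⟨d1, d2, d3⟩
      rcases hcon i j hi hj with ⟨k, hk⟩
      rcases fin3_cover _ _ _ d1 d2 d3 k with h | h | h
      · exact hk i j (Or.inl rfl) (Or.inl rfl) h.symm
      · exact hk (i+1) j (Or.inr rfl) (Or.inl rfl) h.symm
      · exact hk (i+1) (j+1) (Or.inr rfl) (Or.inr rfl) h.symm
    have tri2 : ¬(ℓ i j ≠ ℓ i (j+1) ∧ ℓ i (j+1) ≠ ℓ (i+1) (j+1) ∧ ℓ i j ≠ ℓ (i+1) (j+1)) := by
      rintro ⟨d1, d2, d3⟩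
      rcases hcon i j hi hj with ⟨k, hk⟩
      rcases fin3_cover _ _ _ d1 d2 d3 k with h | h | h
      · exact hk i j (Or.inl rfl) (Or.inl rfl) h.symm
      · exact hk i (j+1) (Or.inl rfl) (Or.inr rfl) h.symm
      · exact hk (i+1) (j+1) (Or.inr rfl) (Or.inr rfl) h.symm
    rw [e01_tri _ _ _ tri1, e01_tri _ _ _ tri2, add_zero]
  -- the global sum is 0
  have S0 : ∑ i ∈ range n, ∑ j ∈ range n,
      ((e01 (ℓ i j) (ℓ (i+1) j) + e01 (ℓ (i+1) j) (ℓ (i+1) (j+1)) + e01 (ℓ i j) (ℓ (i+1) (j+1))) +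
      (e01 (ℓ i j) (ℓ i (j+1)) + e01 (ℓ i (j+1)) (ℓ (i+1) (j+1)) + e01 (ℓ i j) (ℓ (i+1) (j+1))))
      = 0 := by
    apply Finset.sum_eq_zero
    intro i hi
    apply Finset.sum_eq_zero
    intro j hj
    exact key i j (Finset.mem_range.mp hi) (Finset.mem_range.mp hj)
  -- rearrange the global sum
  have rearr : ∀ i j : ℕ,
      ((e01 (ℓ i j) (ℓ (i+1) j) + e01 (ℓ (i+1) j) (ℓ (i+1) (j+1)) + e01 (ℓ i j) (ℓ (i+1) (j+1))) +
      (e01 (ℓ i j) (ℓ i (j+1)) + e01 (ℓ i (j+1)) (ℓ (i+1) (j+1)) + e01 (ℓ i j) (ℓ (i+1) (j+1))))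
      = (h' i j + h' i (j+1)) + (v i j + v (i+1) j) := by
    intro i j
    simp only [hh', hv]
    exact (by decide : ∀ A B C D E : ZMod 2, (A + C + E) + (D + B + E) = (A + B) + (D + C)) _ _ _ _ _
  have S1 : ∑ i ∈ range n, ∑ j ∈ range n,
      ((e01 (ℓ i j) (ℓ (i+1) j) + e01 (ℓ (i+1) j) (ℓ (i+1) (j+1)) + e01 (ℓ i j) (ℓ (i+1) (j+1))) +
      (e01 (ℓ i j) (ℓ i (j+1)) + e01 (ℓ i (j+1)) (ℓ (i+1) (j+1)) + e01 (ℓ i j) (ℓ (i+1) (j+1))))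
      = 1 := by
    calc ∑ i ∈ range n, ∑ j ∈ range n, _
        = ∑ i ∈ range n, ∑ j ∈ range n, ((h' i j + h' i (j+1)) + (v i j + v (i+1) j)) := by
          exact Finset.sum_congr rfl fun i _ => Finset.sum_congr rfl fun j _ => rearr i j
      _ = ∑ i ∈ range n, (∑ j ∈ range n, (h' i j + h' i (j+1)))
          + ∑ i ∈ range n, (∑ j ∈ range n, (v i j + v (i+1) j)) := by
          rw [← Finset.sum_add_distrib]
          exact Finset.sum_congr rfl fun i _ => Finset.sum_add_distrib
      _ = ∑ i ∈ range n, (h' i 0 + h' i n)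
          + ∑ j ∈ range n, (∑ i ∈ range n, (v i j + v (i+1) j)) := by
          rw [Finset.sum_comm (s := range n) (t := range n) (f := fun i j => v i j + v (i+1) j)]
          exact congrArg₂ _ (Finset.sum_congr rfl fun i _ => zmod2_tele n _) rfl
      _ = ∑ i ∈ range n, (h' i 0 + h' i n) + ∑ j ∈ range n, (v 0 j + v n j) := by
          exact congrArg _ (Finset.sum_congr rfl fun j _ => zmod2_tele n (fun i => v i j))
      _ = ∑ i ∈ range n, h' i 0 := by
          have hz1 : ∀ i ∈ range n, h' i 0 + h' i n = h' i 0 + 0 := by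
            intro i hi
            have hi' := Finset.mem_range.mp hi
            rw [show h' i n = 0 from e01_no0 _ _ (htop i (by omega)) (htop (i+1) (by omega))]
          have hz2 : ∀ j ∈ range n, v 0 j + v n j = 0 := by
            intro j hj
            have hj' := Finset.mem_range.mp hj
            rw [show v 0 j = 0 from e01_no1 _ _ (hleft j (by omega)) (hleft (j+1) (by omega)),
              show v n j = 0 from e01_no0 _ _ (by rw [hright j (by omega)]; decide)
                (by rw [hright (j+1) (by omega)]; decide), add_zero]
          rw [Finset.sum_congr rfl hz1, Finset.sum_congr rfl hz2, Finset.sum_const_zero, add_zero]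
          simp only [add_zero]
      _ = ∑ i ∈ range n, ((if ℓ (i+1) 0 = 1 then (1:ZMod 2) else 0) - (if ℓ i 0 = 1 then 1 else 0)) := by
          exact Finset.sum_congr rfl fun i _ => by
            have hi' := Finset.mem_range.mp ‹i ∈ range n›
            exact e01_eq_sub _ _ (hbot i (by omega)) (hbot (i+1) (by omega))
      _ = (if ℓ n 0 = 1 then (1:ZMod 2) else 0) - (if ℓ 0 0 = 1 then 1 else 0) :=
          Finset.sum_range_sub (fun i => if ℓ i 0 = 1 then (1:ZMod 2) else 0) n
      _ = 1 := by
          rw [if_pos (hright 0 (by omega)), if_neg (hleft 0 (by omega)), sub_zero]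
  rw [S0] at S1
  exact absurd S1 (by decide)

end CrossingAux

private noncomputable def pmP (N : ℕ) (i j : ℕ) : ℝ × ℝ := ((i:ℝ)/N, (j:ℝ)/N)

private noncomputable def pmL (g : ℝ × ℝ → ℝ × ℝ) (N : ℕ) (i j : ℕ) : Fin 3 :=
  if 0 < (g (pmP N i j)).1 then 1 else if 0 < (g (pmP N i j)).2 then 2 else 0

private lemma pmL_one_iff (g : ℝ × ℝ → ℝ × ℝ) (N i j : ℕ) :
    pmL g N i j = 1 ↔ 0 < (g (pmP N i j)).1 := by
  unfold pmL
  split_ifs with h1 h2 <;> simp [h1]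
private lemma pmL_two (g : ℝ × ℝ → ℝ × ℝ) (N i j : ℕ) (h : pmL g N i j = 2) :
    0 < (g (pmP N i j)).2 := by
  unfold pmL at h
  split_ifs at h with h1 h2
  · exact absurd h (by decide)
  · exact h2
  · exact absurd h (by decide)
private lemma pmL_zero (g : ℝ × ℝ → ℝ × ℝ) (N i j : ℕ) (h : pmL g N i j = 0) :
    (g (pmP N i j)).1 ≤ 0 ∧ (g (pmP N i j)).2 ≤ 0 := by
  unfold pmL at h
  split_ifs at h with h1 h2
  · exact absurd h (by decide)
  · exact absurd h (by decide)
  · exact ⟨not_lt.mp h1, not_lt.mp h2⟩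

set_option maxHeartbeats 1000000 in
private lemma poincare_miranda (f : ℝ × ℝ → ℝ × ℝ)
    (hf : ContinuousOn f (Set.Icc 0 1 ×ˢ Set.Icc 0 1))
    (hl : ∀ y ∈ Set.Icc (0:ℝ) 1, (f (0, y)).1 ≤ 0)
    (hr : ∀ y ∈ Set.Icc (0:ℝ) 1, 0 ≤ (f (1, y)).1)
    (hb : ∀ x ∈ Set.Icc (0:ℝ) 1, (f (x, 0)).2 ≤ 0)
    (ht : ∀ x ∈ Set.Icc (0:ℝ) 1, 0 ≤ (f (x, 1)).2) :
    ∃ p ∈ Set.Icc (0:ℝ) 1 ×ˢ Set.Icc (0:ℝ) 1, f p = 0 := by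
  have hQc : IsCompact (Set.Icc (0:ℝ) 1 ×ˢ Set.Icc (0:ℝ) 1) := isCompact_Icc.prod isCompact_Icc
  -- approximate zeros
  have approx : ∀ ε > 0, ∃ p ∈ Set.Icc (0:ℝ) 1 ×ˢ Set.Icc (0:ℝ) 1,
      |(f p).1| ≤ ε ∧ |(f p).2| ≤ ε := by
    intro ε hε
    obtain ⟨g, hgc, hg1, hg2⟩ : ∃ g : ℝ × ℝ → ℝ × ℝ,
        ContinuousOn g (Set.Icc 0 1 ×ˢ Set.Icc 0 1) ∧
        (∀ p, (g p).1 = (f p).1 + (ε/4)*(2*p.1 - 1)) ∧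
        (∀ p, (g p).2 = (f p).2 + (ε/4)*(2*p.2 - 1)) := by
      refine ⟨fun p => ((f p).1 + (ε/4)*(2*p.1 - 1), (f p).2 + (ε/4)*(2*p.2 - 1)),
        ?_, fun p => rfl, fun p => rfl⟩
      apply ContinuousOn.prodMk
      · exact hf.fst.add
          ((continuous_const.mul ((continuous_const.mul continuous_fst).sub
            continuous_const)).continuousOn)
      · exact hf.snd.add
          ((continuous_const.mul ((continuous_const.mul continuous_snd).sub
            continuous_const)).continuousOn)
    have hguc := hQc.uniformContinuousOn_of_continuous hgc
    rw [Metric.uniformContinuousOn_iff] at hguc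
    obtain ⟨δ, hδ, hδ'⟩ := hguc (ε/4) (by linarith)
    obtain ⟨n, hn⟩ := exists_nat_one_div_lt hδ
    set N : ℕ := n + 1 with hN
    have hNR : (0:ℝ) < N := by positivity
    have hPQ : ∀ i ≤ N, ∀ j ≤ N, pmP N i j ∈ Set.Icc (0:ℝ) 1 ×ˢ Set.Icc (0:ℝ) 1 := by
      intro i hi j hj
      have heq : pmP N i j = ((i:ℝ)/N, (j:ℝ)/N) := rfl
      rw [heq]
      constructor
      · exact ⟨by positivity, by rw [div_le_one hNR]; exact_mod_cast hi⟩
      · exact ⟨by positivity, by rw [div_le_one hNR]; exact_mod_cast hj⟩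
    have hcoordy : ∀ j ≤ N, (j:ℝ)/N ∈ Set.Icc (0:ℝ) 1 := fun j hj => (hPQ 0 (by omega) j hj).2
    have hP0 : ∀ j, pmP N 0 j = (0, (j:ℝ)/N) := by intro j; unfold pmP; norm_num
    have hPN : ∀ j, pmP N N j = (1, (j:ℝ)/N) := by
      intro j; unfold pmP; rw [div_self hNR.ne']
    have hPb : ∀ i, pmP N i 0 = ((i:ℝ)/N, 0) := by intro i; unfold pmP; norm_num
    have hPt : ∀ i, pmP N i N = ((i:ℝ)/N, 1) := by
      intro i; unfold pmP; rw [div_self hNR.ne']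
    have hleft : ∀ j ≤ N, pmL g N 0 j ≠ 1 := by
      intro j hj h
      have := (pmL_one_iff g N 0 j).mp h
      rw [hP0 j, hg1] at this
      have h2 := hl ((j:ℝ)/N) (hcoordy j hj)
      simp only at this
      nlinarith
    have hright : ∀ j ≤ N, pmL g N N j = 1 := by
      intro j hj
      rw [pmL_one_iff, hPN j, hg1]
      have h2 := hr ((j:ℝ)/N) (hcoordy j hj)
      simp only
      nlinarith
    have hbot : ∀ i ≤ N, pmL g N i 0 ≠ 2 := by
      intro i hi h
      have := pmL_two g N i 0 h
      rw [hPb i, hg2] at this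
      have h2 := hb ((i:ℝ)/N) (hcoordy i hi)
      simp only at this
      nlinarith
    have htop : ∀ i ≤ N, pmL g N i N ≠ 0 := by
      intro i hi h
      have := (pmL_zero g N i N h).2
      rw [hPt i, hg2] at this
      have h2 := ht ((i:ℝ)/N) (hcoordy i hi)
      simp only at this
      nlinarith
    obtain ⟨i, j, hi, hj, hcell⟩ := discrete_sperner N (pmL g N) hleft hright hbot htop
    obtain ⟨a₀, b₀, ha₀, hb₀, hl₀⟩ := hcell 0
    obtain ⟨a₁, b₁, ha₁, hb₁, hl₁⟩ := hcell 1
    obtain ⟨a₂, b₂, ha₂, hb₂, hl₂⟩ := hcell 2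
    have hmemN : ∀ a b : ℕ, (a = i ∨ a = i+1) → (b = j ∨ b = j+1) →
        pmP N a b ∈ Set.Icc (0:ℝ) 1 ×ˢ Set.Icc (0:ℝ) 1 := by
      rintro a b (rfl|rfl) (rfl|rfl) <;> exact hPQ _ (by omega) _ (by omega)
    have key : ∀ m : ℕ, ∀ c c' : ℕ, (c = m ∨ c = m+1) → (c' = m ∨ c' = m+1) →
        dist ((c:ℝ)/N) ((c':ℝ)/N) ≤ 1/N := by
      rintro m c c' (rfl|rfl) (rfl|rfl) <;>
        · rw [Real.dist_eq, div_sub_div_same, abs_div, abs_of_nonneg hNR.le]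
          gcongr
          rw [abs_le]
          constructor <;> push_cast <;> linarith
    have hdist : ∀ a b a' b' : ℕ, (a = i ∨ a = i+1) → (b = j ∨ b = j+1) →
        (a' = i ∨ a' = i+1) → (b' = j ∨ b' = j+1) → dist (pmP N a b) (pmP N a' b') < δ := by
      intro a b a' b' ha hb1 ha' hb2
      have : dist (pmP N a b) (pmP N a' b') ≤ 1/N := by
        rw [Prod.dist_eq]
        exact max_le (key i a a' ha ha') (key j b b' hb1 hb2)
      calc dist (pmP N a b) (pmP N a' b') ≤ 1/N := this
        _ < δ := by rw [hN]; push_cast; exact hn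
    have sign₀ := pmL_zero g N a₀ b₀ hl₀
    have sign₁ := (pmL_one_iff g N a₁ b₁).mp hl₁
    have sign₂ := pmL_two g N a₂ b₂ hl₂
    have huQ : pmP N a₀ b₀ ∈ Set.Icc (0:ℝ) 1 ×ˢ Set.Icc (0:ℝ) 1 := hmemN _ _ ha₀ hb₀
    have d1 : dist (g (pmP N a₁ b₁)) (g (pmP N a₀ b₀)) < ε/4 :=
      hδ' _ (hmemN _ _ ha₁ hb₁) _ huQ (hdist _ _ _ _ ha₁ hb₁ ha₀ hb₀)
    have d2 : dist (g (pmP N a₂ b₂)) (g (pmP N a₀ b₀)) < ε/4 :=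
      hδ' _ (hmemN _ _ ha₂ hb₂) _ huQ (hdist _ _ _ _ ha₂ hb₂ ha₀ hb₀)
    have e1 : |(g (pmP N a₁ b₁)).1 - (g (pmP N a₀ b₀)).1| < ε/4 := by
      calc |(g (pmP N a₁ b₁)).1 - (g (pmP N a₀ b₀)).1| = dist (g (pmP N a₁ b₁)).1 (g (pmP N a₀ b₀)).1 :=
            (Real.dist_eq _ _).symm
        _ ≤ dist (g (pmP N a₁ b₁)) (g (pmP N a₀ b₀)) := by rw [Prod.dist_eq]; exact le_max_left _ _
        _ < ε/4 := d1
    have e2 : |(g (pmP N a₂ b₂)).2 - (g (pmP N a₀ b₀)).2| < ε/4 := by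
      calc |(g (pmP N a₂ b₂)).2 - (g (pmP N a₀ b₀)).2| = dist (g (pmP N a₂ b₂)).2 (g (pmP N a₀ b₀)).2 :=
            (Real.dist_eq _ _).symm
        _ ≤ dist (g (pmP N a₂ b₂)) (g (pmP N a₀ b₀)) := by rw [Prod.dist_eq]; exact le_max_right _ _
        _ < ε/4 := d2
    have hgu1 : |(g (pmP N a₀ b₀)).1| ≤ ε/4 := by
      rw [abs_of_nonpos sign₀.1]
      rw [abs_lt] at e1
      linarith [e1.1, e1.2, sign₁]
    have hgu2 : |(g (pmP N a₀ b₀)).2| ≤ ε/4 := by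
      rw [abs_of_nonpos sign₀.2]
      rw [abs_lt] at e2
      linarith [e2.1, e2.2, sign₂]
    refine ⟨pmP N a₀ b₀, huQ, ?_, ?_⟩
    · obtain ⟨hx0, hx1⟩ := huQ.1
      rw [hg1 (pmP N a₀ b₀)] at hgu1
      rw [abs_le] at hgu1 ⊢
      constructor <;> nlinarith [hgu1.1, hgu1.2]
    · obtain ⟨hy0, hy1⟩ := huQ.2
      rw [hg2 (pmP N a₀ b₀)] at hgu2
      rw [abs_le] at hgu2 ⊢
      constructor <;> nlinarith [hgu2.1, hgu2.2]
  -- now conclude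
  have hQne : (Set.Icc (0:ℝ) 1 ×ˢ Set.Icc (0:ℝ) 1).Nonempty :=
    ⟨(0,0), ⟨⟨le_refl _, zero_le_one⟩, ⟨le_refl _, zero_le_one⟩⟩⟩
  have hφc : ContinuousOn (fun p => max |(f p).1| |(f p).2|)
      (Set.Icc (0:ℝ) 1 ×ˢ Set.Icc (0:ℝ) 1) := (hf.fst.abs).sup (hf.snd.abs)
  obtain ⟨x₀, hx₀Q, hx₀min⟩ := hQc.exists_isMinOn hQne hφc
  have hφ0 : max |(f x₀).1| |(f x₀).2| ≤ 0 := by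
    by_contra hcon
    push_neg at hcon
    obtain ⟨p, hpQ, h1, h2⟩ := approx (max |(f x₀).1| |(f x₀).2| / 2) (by linarith)
    have h3 : max |(f x₀).1| |(f x₀).2| ≤ max |(f p).1| |(f p).2| := isMinOn_iff.mp hx₀min p hpQ
    have h4 := max_le h1 h2
    linarith
  refine ⟨x₀, hx₀Q, ?_⟩
  have h1 : |(f x₀).1| ≤ 0 := le_trans (le_max_left _ _) hφ0
  have h2 : |(f x₀).2| ≤ 0 := le_trans (le_max_right _ _) hφ0
  have e1 := abs_eq_zero.mp (le_antisymm h1 (abs_nonneg _))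
  have e2 := abs_eq_zero.mp (le_antisymm h2 (abs_nonneg _))
  exact Prod.ext e1 e2

private noncomputable def segPath (a b : ℝ × ℝ) : Path a b where
  toFun t := ((1 - (t:ℝ)) * a.1 + (t:ℝ) * b.1, (1 - (t:ℝ)) * a.2 + (t:ℝ) * b.2)
  continuous_toFun := by fun_prop
  source' := by simp
  target' := by simp

private lemma segPath_apply (a b : ℝ × ℝ) (t : unitInterval) :
    (segPath a b) t = ((1 - (t:ℝ)) * a.1 + (t:ℝ) * b.1, (1 - (t:ℝ)) * a.2 + (t:ℝ) * b.2) := rfl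

private lemma convex_comb_mem (x y t : ℝ) (h0 : 0 ≤ t) (h1 : t ≤ 1) :
    (1-t)*x + t*y ∈ Set.uIcc x y := by
  rcases le_total x y with h | h
  · rw [Set.uIcc_of_le h]; constructor <;> nlinarith
  · rw [Set.uIcc_of_ge h]; constructor <;> nlinarith

private lemma segPath_mem {a b : ℝ × ℝ} {p : ℝ × ℝ} (hp : p ∈ Set.range (segPath a b)) :
    p.1 ∈ Set.uIcc a.1 b.1 ∧ p.2 ∈ Set.uIcc a.2 b.2 := by
  obtain ⟨t, rfl⟩ := hp
  rw [segPath_apply]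
  exact ⟨convex_comb_mem _ _ _ t.2.1 t.2.2, convex_comb_mem _ _ _ t.2.1 t.2.2⟩

private noncomputable def toPath (γ : ℝ → ℝ × ℝ) (h : ContinuousOn γ (Set.Icc 0 1)) :
    Path (γ 0) (γ 1) where
  toFun t := γ t
  continuous_toFun := h.comp_continuous continuous_subtype_val (fun t => t.2)
  source' := by norm_num
  target' := by norm_num

private lemma toPath_range (γ : ℝ → ℝ × ℝ) (h : ContinuousOn γ (Set.Icc 0 1)) :
    Set.range (toPath γ h) = γ '' Set.Icc 0 1 := by
  have he : ⇑(toPath γ h) = γ ∘ (Subtype.val) := rfl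
  rw [he, Set.range_comp, Subtype.range_coe]

private lemma crossing {p₁ q₁ p₂ q₂ : ℝ × ℝ} (C : Path p₁ q₁) (D : Path p₂ q₂)
    (hC : ∀ t, C t ∈ Set.Icc (-1:ℝ) 2 ×ˢ Set.Icc (-1:ℝ) 2)
    (hD : ∀ t, D t ∈ Set.Icc (-1:ℝ) 2 ×ˢ Set.Icc (-1:ℝ) 2)
    (hp₁ : p₁.1 = -1) (hq₁ : q₁.1 = 2) (hp₂ : p₂.2 = -1) (hq₂ : q₂.2 = 2) :
    (Set.range C ∩ Set.range D).Nonempty := by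
  have hpr0 : Set.projIcc (0:ℝ) 1 zero_le_one 0 = 0 := Set.projIcc_left zero_le_one
  have hpr1 : Set.projIcc (0:ℝ) 1 zero_le_one 1 = 1 := Set.projIcc_right zero_le_one
  have hfc : Continuous (fun z : ℝ × ℝ =>
      ((C (Set.projIcc 0 1 zero_le_one z.1)).1 - (D (Set.projIcc 0 1 zero_le_one z.2)).1,
       (D (Set.projIcc 0 1 zero_le_one z.2)).2 - (C (Set.projIcc 0 1 zero_le_one z.1)).2)) := by
    have hCc : Continuous (fun z : ℝ×ℝ => C (Set.projIcc 0 1 zero_le_one z.1)) :=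
      C.continuous.comp (continuous_projIcc.comp continuous_fst)
    have hDc : Continuous (fun z : ℝ×ℝ => D (Set.projIcc 0 1 zero_le_one z.2)) :=
      D.continuous.comp (continuous_projIcc.comp continuous_snd)
    exact (hCc.fst.sub hDc.fst).prodMk (hDc.snd.sub hCc.snd)
  have hl' : ∀ y ∈ Set.Icc (0:ℝ) 1,
      (C (Set.projIcc (0:ℝ) 1 zero_le_one 0)).1 - (D (Set.projIcc (0:ℝ) 1 zero_le_one y)).1 ≤ 0 := by
    intro y _
    rw [hpr0, Path.source, hp₁]
    linarith [(hD (Set.projIcc (0:ℝ) 1 zero_le_one y)).1.1]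
  have hr' : ∀ y ∈ Set.Icc (0:ℝ) 1,
      0 ≤ (C (Set.projIcc (0:ℝ) 1 zero_le_one 1)).1 - (D (Set.projIcc (0:ℝ) 1 zero_le_one y)).1 := by
    intro y _
    rw [hpr1, Path.target, hq₁]
    linarith [(hD (Set.projIcc (0:ℝ) 1 zero_le_one y)).1.2]
  have hb' : ∀ x ∈ Set.Icc (0:ℝ) 1,
      (D (Set.projIcc (0:ℝ) 1 zero_le_one 0)).2 - (C (Set.projIcc (0:ℝ) 1 zero_le_one x)).2 ≤ 0 := by
    intro x _
    rw [hpr0, Path.source, hp₂]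
    linarith [(hC (Set.projIcc (0:ℝ) 1 zero_le_one x)).2.1]
  have ht' : ∀ x ∈ Set.Icc (0:ℝ) 1,
      0 ≤ (D (Set.projIcc (0:ℝ) 1 zero_le_one 1)).2 - (C (Set.projIcc (0:ℝ) 1 zero_le_one x)).2 := by
    intro x _
    rw [hpr1, Path.target, hq₂]
    linarith [(hC (Set.projIcc (0:ℝ) 1 zero_le_one x)).2.2]
  obtain ⟨p, _, hp0⟩ := poincare_miranda (fun z =>
      ((C (Set.projIcc 0 1 zero_le_one z.1)).1 - (D (Set.projIcc 0 1 zero_le_one z.2)).1,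
       (D (Set.projIcc 0 1 zero_le_one z.2)).2 - (C (Set.projIcc 0 1 zero_le_one z.1)).2))
    hfc.continuousOn hl' hr' hb' ht'
  obtain ⟨e1, e2⟩ := Prod.ext_iff.mp hp0
  simp only [Prod.fst_zero, Prod.snd_zero] at e1 e2
  have hCD : C (Set.projIcc 0 1 zero_le_one p.1) = D (Set.projIcc 0 1 zero_le_one p.2) :=
    Prod.ext_iff.mpr ⟨by linarith, by linarith⟩
  exact ⟨C (Set.projIcc 0 1 zero_le_one p.1), ⟨_, rfl⟩, ⟨_, hCD.symm⟩⟩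


/-- Two disjoint simple curves crossing the unit square from left edge to right edge
preserve the vertical order of their endpoints. -/
theorem crossing_curves_preserve_order
    (γ₁ γ₂ : ℝ → ℝ × ℝ)
    (hc₁ : ContinuousOn γ₁ (Icc 0 1)) (hc₂ : ContinuousOn γ₂ (Icc 0 1))
    (hinj₁ : InjOn γ₁ (Icc 0 1)) (hinj₂ : InjOn γ₂ (Icc 0 1))
    (hrange₁ : MapsTo γ₁ (Icc 0 1) (Icc (0:ℝ) 1 ×ˢ Icc (0:ℝ) 1))
    (hrange₂ : MapsTo γ₂ (Icc 0 1) (Icc (0:ℝ) 1 ×ˢ Icc (0:ℝ) 1))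
    (hdisj : γ₁ '' Icc 0 1 ∩ γ₂ '' Icc 0 1 = ∅)
    (a₁ a₂ b₁ b₂ : ℝ)
    (h₁0 : γ₁ 0 = (0, a₁)) (h₁1 : γ₁ 1 = (1, b₁))
    (h₂0 : γ₂ 0 = (0, a₂)) (h₂1 : γ₂ 1 = (1, b₂))
    (hab : a₁ < a₂) :
    b₁ < b₂ := by
  by_contra hcon
  push_neg at hcon
  have mem0 : (0:ℝ) ∈ Set.Icc (0:ℝ) 1 := ⟨le_refl _, zero_le_one⟩
  have mem1 : (1:ℝ) ∈ Set.Icc (0:ℝ) 1 := ⟨zero_le_one, le_refl _⟩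
  have hd : ∀ p : ℝ × ℝ, p ∈ γ₁ '' Set.Icc 0 1 → p ∈ γ₂ '' Set.Icc 0 1 → False := by
    intro p h1 h2
    have hm : p ∈ γ₁ '' Set.Icc 0 1 ∩ γ₂ '' Set.Icc 0 1 := ⟨h1, h2⟩
    rw [hdisj] at hm
    exact hm
  have hm10 : ((0:ℝ), a₁) ∈ γ₁ '' Set.Icc 0 1 := ⟨0, mem0, h₁0⟩
  have hm11 : ((1:ℝ), b₁) ∈ γ₁ '' Set.Icc 0 1 := ⟨1, mem1, h₁1⟩
  have hm20 : ((0:ℝ), a₂) ∈ γ₂ '' Set.Icc 0 1 := ⟨0, mem0, h₂0⟩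
  have hm21 : ((1:ℝ), b₂) ∈ γ₂ '' Set.Icc 0 1 := ⟨1, mem1, h₂1⟩
  have ha₁ : a₁ ∈ Set.Icc (0:ℝ) 1 := by have h := hrange₁ mem0; rw [h₁0] at h; exact h.2
  have ha₂ : a₂ ∈ Set.Icc (0:ℝ) 1 := by have h := hrange₂ mem0; rw [h₂0] at h; exact h.2
  have hbm₁ : b₁ ∈ Set.Icc (0:ℝ) 1 := by have h := hrange₁ mem1; rw [h₁1] at h; exact h.2
  have hbm₂ : b₂ ∈ Set.Icc (0:ℝ) 1 := by have h := hrange₂ mem1; rw [h₂1] at h; exact h.2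
  have hbne : b₂ ≠ b₁ := by
    intro h
    exact hd (1, b₁) hm11 (by rw [← h]; exact hm21)
  have hbb : b₂ < b₁ := lt_of_le_of_ne hcon hbne
  -- construct the two crossing paths in the big square [-1,2] × [-1,2]
  set P2 : Path ((0:ℝ), a₁) ((1:ℝ), b₁) := (toPath γ₁ hc₁).cast h₁0.symm h₁1.symm with hP2
  set G2 : Path ((0:ℝ), a₂) ((1:ℝ), b₂) := (toPath γ₂ hc₂).cast h₂0.symm h₂1.symm with hG2
  set C : Path ((-1:ℝ), a₁) ((2:ℝ), b₁) :=
    (segPath (-1, a₁) (0, a₁)).trans (P2.trans (segPath (1, b₁) (2, b₁))) with hCdef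
  set D : Path ((2:ℝ), -1) ((-1:ℝ), 2) :=
    (segPath (2, -1) (2, b₂)).trans ((segPath (2, b₂) (1, b₂)).trans
      (G2.symm.trans ((segPath (0, a₂) (-1, a₂)).trans (segPath (-1, a₂) (-1, 2))))) with hDdef
  have rP2 : Set.range ⇑P2 = γ₁ '' Set.Icc 0 1 := by
    rw [hP2, Path.cast_coe, toPath_range]
  have rG2 : Set.range ⇑G2.symm = γ₂ '' Set.Icc 0 1 := by
    rw [hG2, Path.symm_range, Path.cast_coe, toPath_range]
  have rangeC : Set.range ⇑C = Set.range ⇑(segPath ((-1:ℝ), a₁) (0, a₁)) ∪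
      (γ₁ '' Set.Icc 0 1 ∪ Set.range ⇑(segPath ((1:ℝ), b₁) (2, b₁))) := by
    rw [hCdef, Path.trans_range, Path.trans_range, rP2]
  have rangeD : Set.range ⇑D = Set.range ⇑(segPath ((2:ℝ), -1) (2, b₂)) ∪
      (Set.range ⇑(segPath ((2:ℝ), b₂) (1, b₂)) ∪ (γ₂ '' Set.Icc 0 1 ∪
      (Set.range ⇑(segPath ((0:ℝ), a₂) (-1, a₂)) ∪ Set.range ⇑(segPath ((-1:ℝ), a₂) (-1, 2))))) := by
    rw [hDdef, Path.trans_range, Path.trans_range, Path.trans_range, Path.trans_range, rG2]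
  have hmemR : ∀ x y : ℝ, -1 ≤ x → x ≤ 2 → -1 ≤ y → y ≤ 2 →
      ((x, y) : ℝ × ℝ) ∈ Set.Icc (-1:ℝ) 2 ×ˢ Set.Icc (-1:ℝ) 2 :=
    fun x y h1 h2 h3 h4 => ⟨⟨h1, h2⟩, ⟨h3, h4⟩⟩
  have hsegR : ∀ a b : ℝ × ℝ, a ∈ Set.Icc (-1:ℝ) 2 ×ˢ Set.Icc (-1:ℝ) 2 →
      b ∈ Set.Icc (-1:ℝ) 2 ×ˢ Set.Icc (-1:ℝ) 2 →
      ∀ p ∈ Set.range ⇑(segPath a b), p ∈ Set.Icc (-1:ℝ) 2 ×ˢ Set.Icc (-1:ℝ) 2 := by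
    intro a b ha hb p hp
    have h := segPath_mem hp
    constructor
    · rcases Set.mem_uIcc.mp h.1 with ⟨h1, h2⟩ | ⟨h1, h2⟩ <;>
        exact ⟨by linarith [ha.1.1, hb.1.1], by linarith [ha.1.2, hb.1.2]⟩
    · rcases Set.mem_uIcc.mp h.2 with ⟨h1, h2⟩ | ⟨h1, h2⟩ <;>
        exact ⟨by linarith [ha.2.1, hb.2.1], by linarith [ha.2.2, hb.2.2]⟩
  have hsq : ∀ p : ℝ × ℝ, p ∈ Set.Icc (0:ℝ) 1 ×ˢ Set.Icc (0:ℝ) 1 →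
      p ∈ Set.Icc (-1:ℝ) 2 ×ˢ Set.Icc (-1:ℝ) 2 := by
    intro p hp
    exact ⟨⟨by linarith [hp.1.1], by linarith [hp.1.2]⟩,
      ⟨by linarith [hp.2.1], by linarith [hp.2.2]⟩⟩
  have hCR : ∀ t, C t ∈ Set.Icc (-1:ℝ) 2 ×ˢ Set.Icc (-1:ℝ) 2 := by
    intro t
    have hmem : C t ∈ Set.range ⇑C := Set.mem_range_self t
    rw [rangeC] at hmem
    rcases hmem with h | h | h
    · exact hsegR _ _ (hmemR _ _ (by norm_num) (by norm_num) (by linarith [ha₁.1]) (by linarith [ha₁.2]))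
        (hmemR _ _ (by norm_num) (by norm_num) (by linarith [ha₁.1]) (by linarith [ha₁.2])) _ h
    · obtain ⟨s, hs, hps⟩ := h
      exact hps ▸ hsq _ (hrange₁ hs)
    · exact hsegR _ _ (hmemR _ _ (by norm_num) (by norm_num) (by linarith [hbm₁.1]) (by linarith [hbm₁.2]))
        (hmemR _ _ (by norm_num) (by norm_num) (by linarith [hbm₁.1]) (by linarith [hbm₁.2])) _ h
  have hDR : ∀ t, D t ∈ Set.Icc (-1:ℝ) 2 ×ˢ Set.Icc (-1:ℝ) 2 := by
    intro t
    have hmem : D t ∈ Set.range ⇑D := Set.mem_range_self t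
    rw [rangeD] at hmem
    rcases hmem with h | h | h | h | h
    · exact hsegR _ _ (hmemR _ _ (by norm_num) (by norm_num) (by norm_num) (by norm_num))
        (hmemR _ _ (by norm_num) (by norm_num) (by linarith [hbm₂.1]) (by linarith [hbm₂.2])) _ h
    · exact hsegR _ _ (hmemR _ _ (by norm_num) (by norm_num) (by linarith [hbm₂.1]) (by linarith [hbm₂.2]))
        (hmemR _ _ (by norm_num) (by norm_num) (by linarith [hbm₂.1]) (by linarith [hbm₂.2])) _ h
    · obtain ⟨s, hs, hps⟩ := h
      exact hps ▸ hsq _ (hrange₂ hs)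
    · exact hsegR _ _ (hmemR _ _ (by norm_num) (by norm_num) (by linarith [ha₂.1]) (by linarith [ha₂.2]))
        (hmemR _ _ (by norm_num) (by norm_num) (by linarith [ha₂.1]) (by linarith [ha₂.2])) _ h
    · exact hsegR _ _ (hmemR _ _ (by norm_num) (by norm_num) (by linarith [ha₂.1]) (by linarith [ha₂.2]))
        (hmemR _ _ (by norm_num) (by norm_num) (by norm_num) (by norm_num)) _ h
  obtain ⟨p, hpC, hpD⟩ := crossing C D hCR hDR rfl rfl rfl rfl
  rw [rangeC] at hpC
  rw [rangeD] at hpD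
  -- coordinate facts for each possible piece
  have segx : ∀ {a b : ℝ × ℝ}, p ∈ Set.range ⇑(segPath a b) → p.1 ∈ Set.uIcc a.1 b.1 :=
    fun h => (segPath_mem h).1
  have segy : ∀ {a b : ℝ × ℝ}, p ∈ Set.range ⇑(segPath a b) → p.2 ∈ Set.uIcc a.2 b.2 :=
    fun h => (segPath_mem h).2
  rcases hpC with hS1 | hG1 | hS2
  · -- p on left segment of C : p.2 = a₁, -1 ≤ p.1 ≤ 0
    have s1y : p.2 = a₁ := by
      have h := segy hS1; rwa [Set.uIcc_self, Set.mem_singleton_iff] at h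
    have s1x : p.1 ∈ Set.Icc (-1:ℝ) 0 := by
      have h := segx hS1; rwa [Set.uIcc_of_le (by norm_num : (-1:ℝ) ≤ 0)] at h
    rcases hpD with hT1 | hT2 | hG2' | hT3 | hT4
    · have t1x : p.1 = 2 := by
        have h := segx hT1; rwa [Set.uIcc_self, Set.mem_singleton_iff] at h
      linarith [s1x.2]
    · have t2x : p.1 ∈ Set.Icc (1:ℝ) 2 := by
        have h := segx hT2; rwa [Set.uIcc_of_ge (by norm_num : (1:ℝ) ≤ 2)] at h
      linarith [s1x.2, t2x.1]
    · have hpb := (fun (⟨s, hs, hps⟩ : p ∈ γ₂ '' Set.Icc 0 1) => hps ▸ hrange₂ hs) hG2'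
      have hp1 : p.1 = 0 := le_antisymm s1x.2 hpb.1.1
      have hpe : p = ((0:ℝ), a₁) := Prod.ext_iff.mpr ⟨hp1, s1y⟩
      exact hd p (hpe ▸ hm10) hG2'
    · have t3y : p.2 = a₂ := by
        have h := segy hT3; rwa [Set.uIcc_self, Set.mem_singleton_iff] at h
      rw [s1y] at t3y
      linarith
    · have t4y : p.2 ∈ Set.Icc a₂ 2 := by
        have h := segy hT4; rwa [Set.uIcc_of_le (by linarith [ha₂.2] : a₂ ≤ 2)] at h
      rw [s1y] at t4y
      linarith [t4y.1]
  · -- p on γ₁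
    have hpb := (fun (⟨s, hs, hps⟩ : p ∈ γ₁ '' Set.Icc 0 1) => hps ▸ hrange₁ hs) hG1
    rcases hpD with hT1 | hT2 | hG2' | hT3 | hT4
    · have t1x : p.1 = 2 := by
        have h := segx hT1; rwa [Set.uIcc_self, Set.mem_singleton_iff] at h
      linarith [hpb.1.2]
    · have t2y : p.2 = b₂ := by
        have h := segy hT2; rwa [Set.uIcc_self, Set.mem_singleton_iff] at h
      have t2x : p.1 ∈ Set.Icc (1:ℝ) 2 := by
        have h := segx hT2; rwa [Set.uIcc_of_ge (by norm_num : (1:ℝ) ≤ 2)] at h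
      have hp1 : p.1 = 1 := le_antisymm hpb.1.2 t2x.1
      have hpe : p = ((1:ℝ), b₂) := Prod.ext_iff.mpr ⟨hp1, t2y⟩
      exact hd p hG1 (hpe ▸ hm21)
    · exact hd p hG1 hG2'
    · have t3y : p.2 = a₂ := by
        have h := segy hT3; rwa [Set.uIcc_self, Set.mem_singleton_iff] at h
      have t3x : p.1 ∈ Set.Icc (-1:ℝ) 0 := by
        have h := segx hT3; rwa [Set.uIcc_of_ge (by norm_num : (-1:ℝ) ≤ 0)] at h
      have hp1 : p.1 = 0 := le_antisymm t3x.2 hpb.1.1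
      have hpe : p = ((0:ℝ), a₂) := Prod.ext_iff.mpr ⟨hp1, t3y⟩
      exact hd p hG1 (hpe ▸ hm20)
    · have t4x : p.1 = -1 := by
        have h := segx hT4; rwa [Set.uIcc_self, Set.mem_singleton_iff] at h
      linarith [hpb.1.1]
  · -- p on right segment of C : p.2 = b₁, 1 ≤ p.1 ≤ 2
    have s2y : p.2 = b₁ := by
      have h := segy hS2; rwa [Set.uIcc_self, Set.mem_singleton_iff] at h
    have s2x : p.1 ∈ Set.Icc (1:ℝ) 2 := by
      have h := segx hS2; rwa [Set.uIcc_of_le (by norm_num : (1:ℝ) ≤ 2)] at h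
    rcases hpD with hT1 | hT2 | hG2' | hT3 | hT4
    · have t1y : p.2 ∈ Set.Icc (-1:ℝ) b₂ := by
        have h := segy hT1; rwa [Set.uIcc_of_le (by linarith [hbm₂.1] : (-1:ℝ) ≤ b₂)] at h
      rw [s2y] at t1y
      linarith [t1y.2]
    · have t2y : p.2 = b₂ := by
        have h := segy hT2; rwa [Set.uIcc_self, Set.mem_singleton_iff] at h
      rw [s2y] at t2y
      linarith
    · have hpb := (fun (⟨s, hs, hps⟩ : p ∈ γ₂ '' Set.Icc 0 1) => hps ▸ hrange₂ hs) hG2'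
      have hp1 : p.1 = 1 := le_antisymm hpb.1.2 s2x.1
      have hpe : p = ((1:ℝ), b₁) := Prod.ext_iff.mpr ⟨hp1, s2y⟩
      exact hd p (hpe ▸ hm11) hG2'
    · have t3x : p.1 ∈ Set.Icc (-1:ℝ) 0 := by
        have h := segx hT3; rwa [Set.uIcc_of_ge (by norm_num : (-1:ℝ) ≤ 0)] at h
      linarith [s2x.1, t3x.2]
    · have t4x : p.1 = -1 := by
        have h := segx hT4; rwa [Set.uIcc_self, Set.mem_singleton_iff] at h
      linarith [s2x.1]
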